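/- arXiv:2008.09843 — 3 statements merged into one kernel-verified Lean document; each statement's English description precedes it below -/
import Mathlib

section
/- Let a, b, c, γ̄ > 0 and T_c > 1, and suppose γ̄ b (T_c−1)/(1+γ̄ c) > ln(1+γ̄ c). Then there exists a unique K* ∈ (0, T_c − 1) satisfying γ̄ (T_c − K − 1)(2aK + b) / (1 + γ̄(aK² + bK + c)) = ln(1 + γ̄(aK² + bK + c)), and this K* is the unique maximizer of R̃(K) = (1 − (K+1)/T_c)·log₂(1 + γ̄(aK² + bK + c)) on (0, T_c − 1]. -/
/-!
Write `u = 1 + γ̄ (aK² + bK + c)` and `F = (T_c − K − 1) ln u`, so that `R̃ = F / (T_c ln 2)`.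
Then `F' = Φ / u` with `Φ = γ̄ (T_c − K − 1)(2aK + b) − u ln u`, and the stationarity equation
is `Φ = 0`. The function `Φ` is strictly concave on `[0, ∞)` (its derivative
`2aγ̄ (T_c − 1 − K) − γ̄ (2aK + b)(2 + ln u)` is strictly decreasing), positive at `0` by the
hypothesis and negative at `T_c − 1`. Hence `Φ` has exactly one zero `K*` there, is positive
before it and negative after it, so `F` increases strictly up to `K*` and decreases strictly after.
-/

open Real Set

theorem StrictConcaveOn.pos_of_mem_openSegment {𝕜 E : Type*} [Field 𝕜] [LinearOrder 𝕜]
    [IsStrictOrderedRing 𝕜] [AddCommGroup E] [Module 𝕜 E] {s : Set E} {f : E → 𝕜} {x y z : E}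
    (hf : StrictConcaveOn 𝕜 s f) (hx : x ∈ s) (hz : z ∈ s) (hxz : x ≠ z)
    (hy : y ∈ openSegment 𝕜 x z) (hfx : 0 ≤ f x) (hfz : 0 ≤ f z) : 0 < f y :=
  (le_min hfx hfz).trans_lt (hf.lt_on_openSegment hx hz hxz hy)

theorem StrictConcaveOn.neg_of_mem_openSegment {𝕜 E : Type*} [Field 𝕜] [LinearOrder 𝕜]
    [IsStrictOrderedRing 𝕜] [AddCommGroup E] [Module 𝕜 E] {s : Set E} {f : E → 𝕜} {x y z : E}
    (hf : StrictConcaveOn 𝕜 s f) (hx : x ∈ s) (hy : y ∈ s) (hxy : x ≠ y)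
    (hz : z ∈ openSegment 𝕜 x y) (hfx : 0 ≤ f x) (hfz : f z ≤ 0) : f y < 0 := by
  have := (hf.lt_on_openSegment hx hy hxy hz).trans_le hfz
  rw [min_lt_iff] at this
  exact this.resolve_left hfx.not_gt

theorem lt_of_deriv_pos_of_deriv_neg {f : ℝ → ℝ} {a b c x : ℝ} (hab : a ≤ b) (hbc : b ≤ c)
    (hf : ContinuousOn f (Icc a c)) (hpos : ∀ y ∈ Ioo a b, 0 < deriv f y)
    (hneg : ∀ y ∈ Ioo b c, deriv f y < 0) (hx : x ∈ Icc a c) (hxb : x ≠ b) : f x < f b := by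
  rcases hxb.lt_or_gt with hxb | hbx
  · exact strictMonoOn_of_deriv_pos (convex_Icc a b) (hf.mono (Icc_subset_Icc_right hbc))
      (by rwa [interior_Icc]) ⟨hx.1, hxb.le⟩ ⟨hab, le_rfl⟩ hxb
  · exact strictAntiOn_of_deriv_neg (convex_Icc b c) (hf.mono (Icc_subset_Icc_left hab))
      (by rwa [interior_Icc]) ⟨le_rfl, hbc⟩ ⟨hbx.le, hx.2⟩ hbx

namespace OptimalK

variable (a b c γ Tc : ℝ)

def u (K : ℝ) : ℝ := 1 + γ * (a * K ^ 2 + b * K + c)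

noncomputable def F (K : ℝ) : ℝ := (Tc - K - 1) * log (u a b c γ K)

noncomputable def Φ (K : ℝ) : ℝ :=
  γ * (Tc - K - 1) * (2 * a * K + b) - u a b c γ K * log (u a b c γ K)

noncomputable def R (K : ℝ) : ℝ := (1 - (K + 1) / Tc) * logb 2 (u a b c γ K)

variable {a b c γ Tc}

theorem one_lt_u (ha : 0 ≤ a) (hb : 0 ≤ b) (hc : 0 < c) (hγ : 0 < γ) {K : ℝ} (hK : 0 ≤ K) :
    1 < u a b c γ K := by
  have : 0 < a * K ^ 2 + b * K + c := by positivity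
  unfold u
  nlinarith

theorem strictMonoOn_u (ha : 0 ≤ a) (hb : 0 < b) (hγ : 0 < γ) :
    StrictMonoOn (u a b c γ) (Ici 0) := by
  intro x (hx : 0 ≤ x) y _ hxy
  have : a * x ^ 2 + b * x < a * y ^ 2 + b * y := by
    nlinarith [mul_nonneg ha (mul_nonneg (sub_pos.2 hxy).le (add_nonneg hx (hx.trans hxy.le))),
      mul_lt_mul_of_pos_left hxy hb]
  unfold u
  nlinarith

theorem hasDerivAt_u (K : ℝ) : HasDerivAt (u a b c γ) (γ * (2 * a * K + b)) K := by
  have := ((((hasDerivAt_pow 2 K).const_mul a).add ((hasDerivAt_id K).const_mul b)).add_const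
    c |>.const_mul γ).const_add 1
  exact this.congr_deriv (by push_cast; ring)

theorem hasDerivAt_log_u {K : ℝ} (hK : u a b c γ K ≠ 0) :
    HasDerivAt (fun K => log (u a b c γ K)) (γ * (2 * a * K + b) / u a b c γ K) K :=
  (hasDerivAt_u K).log hK

theorem hasDerivAt_Φ {K : ℝ} (hK : u a b c γ K ≠ 0) :
    HasDerivAt (Φ a b c γ Tc)
      (2 * a * γ * (Tc - 1 - K) - γ * (2 * a * K + b) * (2 + log (u a b c γ K))) K := by
  have hlin : HasDerivAt (fun K => γ * (Tc - K - 1) * (2 * a * K + b))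
      (γ * (-1) * (2 * a * K + b) + γ * (Tc - K - 1) * (2 * a)) K := by
    have h1 := (((hasDerivAt_id K).const_sub Tc).sub_const 1).const_mul γ
    have h2 := ((hasDerivAt_id K).const_mul (2 * a)).add_const b
    exact (h1.mul h2).congr_deriv (by simp)
  exact (hlin.sub ((hasDerivAt_u K).mul (hasDerivAt_log_u hK))).congr_deriv (by field_simp; ring)

theorem hasDerivAt_F {K : ℝ} (hK : u a b c γ K ≠ 0) :
    HasDerivAt (F a b c γ Tc) (Φ a b c γ Tc K / u a b c γ K) K := by
  have h1 : HasDerivAt (fun K : ℝ => Tc - K - 1) (-1) K := by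
    simpa using ((hasDerivAt_id K).const_sub Tc).sub_const 1
  exact (h1.mul (hasDerivAt_log_u hK)).congr_deriv (by unfold Φ; field_simp; ring)

theorem Φ_zero_pos (hv : 0 < 1 + γ * c)
    (hcond : γ * b * (Tc - 1) / (1 + γ * c) > log (1 + γ * c)) : 0 < Φ a b c γ Tc 0 := by
  have := (lt_div_iff₀ hv).1 hcond
  norm_num [Φ, u]
  linarith

theorem Φ_sub_one_neg (hu : 1 < u a b c γ (Tc - 1)) : Φ a b c γ Tc (Tc - 1) < 0 := by
  have := mul_pos (one_pos.trans hu) (log_pos hu)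
  simp only [Φ]
  nlinarith

theorem div_u_eq_log_iff {K : ℝ} (hK : u a b c γ K ≠ 0) :
    γ * (Tc - K - 1) * (2 * a * K + b) / u a b c γ K = log (u a b c γ K) ↔
      Φ a b c γ Tc K = 0 := by
  rw [div_eq_iff hK, Φ, sub_eq_zero, mul_comm (log _)]

theorem R_eq_F_div (hTc : Tc ≠ 0) (K : ℝ) : R a b c γ Tc K = F a b c γ Tc K / (Tc * log 2) := by
  unfold R F logb
  field_simp
  ring

section

variable (ha : 0 ≤ a) (hb : 0 < b) (hc : 0 < c) (hγ : 0 < γ)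
include ha hb hc hγ

theorem u_ne_zero {K : ℝ} (hK : 0 ≤ K) : u a b c γ K ≠ 0 :=
  (one_pos.trans (one_lt_u ha hb.le hc hγ hK)).ne'

theorem continuousOn_Φ : ContinuousOn (Φ a b c γ Tc) (Ici 0) := fun _ hK =>
  (hasDerivAt_Φ (u_ne_zero ha hb hc hγ hK)).continuousAt.continuousWithinAt

theorem continuousOn_F : ContinuousOn (F a b c γ Tc) (Ici 0) := fun _ hK =>
  (hasDerivAt_F (u_ne_zero ha hb hc hγ hK)).continuousAt.continuousWithinAt

theorem strictAntiOn_deriv_Φ : StrictAntiOn (deriv (Φ a b c γ Tc)) (Ioi 0) := by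
  intro x (hx : 0 < x) y (hy : 0 < y) hxy
  rw [(hasDerivAt_Φ (u_ne_zero ha hb hc hγ hx.le)).deriv,
    (hasDerivAt_Φ (u_ne_zero ha hb hc hγ hy.le)).deriv]
  have hlog : log (u a b c γ x) < log (u a b c γ y) :=
    log_lt_log (one_pos.trans (one_lt_u ha hb.le hc hγ hx.le))
      (strictMonoOn_u ha hb hγ hx.le hy.le hxy)
  have hlog_pos : 0 < log (u a b c γ x) := log_pos (one_lt_u ha hb.le hc hγ hx.le)
  have hprod : (2 * a * x + b) * (2 + log (u a b c γ x))
      < (2 * a * y + b) * (2 + log (u a b c γ y)) :=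
    mul_lt_mul' (by nlinarith) (by linarith) (by positivity) (by positivity)
  nlinarith [mul_lt_mul_of_pos_left hprod hγ, mul_nonneg (mul_nonneg ha hγ.le) (sub_pos.2 hxy).le]

theorem strictConcaveOn_Φ : StrictConcaveOn ℝ (Ici 0) (Φ a b c γ Tc) := by
  have h := strictAntiOn_deriv_Φ (Tc := Tc) ha hb hc hγ
  rw [← interior_Ici] at h
  exact h.strictConcaveOn_of_deriv (convex_Ici 0) (continuousOn_Φ ha hb hc hγ)

theorem exists_Φ_eq_zero (hTc : 1 < Tc)
    (hcond : γ * b * (Tc - 1) / (1 + γ * c) > log (1 + γ * c)) :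
    ∃ z ∈ Ioo 0 (Tc - 1), Φ a b c γ Tc z = 0 :=
  intermediate_value_Ioo' (by linarith) ((continuousOn_Φ ha hb hc hγ).mono Icc_subset_Ici_self)
    ⟨Φ_sub_one_neg (one_lt_u ha hb.le hc hγ (by linarith)), Φ_zero_pos (by positivity) hcond⟩

theorem Φ_pos_of_lt (hΦ0 : 0 ≤ Φ a b c γ Tc 0) {z K : ℝ} (hz : Φ a b c γ Tc z = 0)
    (hK : 0 < K) (hKz : K < z) : 0 < Φ a b c γ Tc K :=
  (strictConcaveOn_Φ ha hb hc hγ).pos_of_mem_openSegment self_mem_Ici (hK.trans hKz).le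
    (hK.trans hKz).ne (Ioo_subset_openSegment ⟨hK, hKz⟩) hΦ0 hz.ge

theorem Φ_neg_of_lt (hΦ0 : 0 ≤ Φ a b c γ Tc 0) {z K : ℝ} (hz0 : 0 < z)
    (hz : Φ a b c γ Tc z = 0) (hzK : z < K) : Φ a b c γ Tc K < 0 :=
  (strictConcaveOn_Φ ha hb hc hγ).neg_of_mem_openSegment self_mem_Ici (hz0.trans hzK).le
    (hz0.trans hzK).ne (Ioo_subset_openSegment ⟨hz0, hzK⟩) hΦ0 hz.le

theorem F_lt_of_ne (hΦ0 : 0 ≤ Φ a b c γ Tc 0) {z K : ℝ} (hz : z ∈ Ioo 0 (Tc - 1))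
    (hΦz : Φ a b c γ Tc z = 0) (hK : K ∈ Ioc 0 (Tc - 1)) (hKz : K ≠ z) :
    F a b c γ Tc K < F a b c γ Tc z := by
  have hderiv : ∀ y, 0 < y → deriv (F a b c γ Tc) y = Φ a b c γ Tc y / u a b c γ y :=
    fun y hy => (hasDerivAt_F (u_ne_zero ha hb hc hγ hy.le)).deriv
  have hu : ∀ y, 0 < y → 0 < u a b c γ y :=
    fun y hy => one_pos.trans (one_lt_u ha hb.le hc hγ hy.le)
  refine lt_of_deriv_pos_of_deriv_neg hz.1.le hz.2.le
    ((continuousOn_F ha hb hc hγ).mono Icc_subset_Ici_self) (fun y hy => ?_) (fun y hy => ?_)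
    (Ioc_subset_Icc_self hK) hKz
  · rw [hderiv y hy.1]
    exact div_pos (Φ_pos_of_lt ha hb hc hγ hΦ0 hΦz hy.1 hy.2) (hu y hy.1)
  · have hy0 := hz.1.trans hy.1
    rw [hderiv y hy0]
    exact div_neg_of_neg_of_pos (Φ_neg_of_lt ha hb hc hγ hΦ0 hz.1 hΦz hy.1) (hu y hy0)

end

end OptimalK

open OptimalK

/-- There is a unique `K* ∈ (0, T_c − 1)` satisfying the stationarity equation
`γ̄(T_c − K − 1)(2aK + b)/(1 + γ̄(aK² + bK + c)) = ln(1 + γ̄(aK² + bK + c))`,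
and this `K*` is the unique maximizer of
`R̃(K) = (1 − (K+1)/T_c) log₂(1 + γ̄(aK² + bK + c))` on `(0, T_c − 1]`. -/
theorem unique_optimal_K (a b c γ Tc : ℝ)
    (ha : 0 < a) (hb : 0 < b) (hc : 0 < c) (hγ : 0 < γ) (hTc : 1 < Tc)
    (hcond : γ * b * (Tc - 1) / (1 + γ * c) > Real.log (1 + γ * c)) :
    ∃! K : ℝ, K ∈ Set.Ioo (0 : ℝ) (Tc - 1) ∧
      γ * (Tc - K - 1) * (2 * a * K + b) / (1 + γ * (a * K ^ 2 + b * K + c))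
        = Real.log (1 + γ * (a * K ^ 2 + b * K + c)) ∧
      ∀ K' ∈ Set.Ioc (0 : ℝ) (Tc - 1), K' ≠ K →
        (1 - (K' + 1) / Tc) * Real.logb 2 (1 + γ * (a * K' ^ 2 + b * K' + c))
          < (1 - (K + 1) / Tc) * Real.logb 2 (1 + γ * (a * K ^ 2 + b * K + c)) := by
  have hΦ0 : 0 ≤ Φ a b c γ Tc 0 := (Φ_zero_pos (by positivity) hcond).le
  have hu : ∀ K, 0 < K → u a b c γ K ≠ 0 := fun K hK => u_ne_zero ha.le hb hc hγ hK.le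
  obtain ⟨z, hz, hΦz⟩ := exists_Φ_eq_zero ha.le hb hc hγ hTc hcond
  refine ⟨z, ⟨hz, (div_u_eq_log_iff (hu z hz.1)).2 hΦz, fun K hK hKz => ?_⟩, ?_⟩
  · change R a b c γ Tc K < R a b c γ Tc z
    rw [R_eq_F_div (by positivity) K, R_eq_F_div (by positivity) z]
    gcongr ?_ / _
    exact F_lt_of_ne ha.le hb hc hγ hΦ0 hz hΦz hK hKz
  · rintro K ⟨hK, hKeq, -⟩
    have hΦK := (div_u_eq_log_iff (hu K hK.1)).1 hKeq
    by_contra hKz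
    rcases lt_or_gt_of_ne hKz with hlt | hgt
    · exact (Φ_pos_of_lt ha.le hb hc hγ hΦ0 hΦz hK.1 hlt).ne' hΦK
    · exact (Φ_neg_of_lt ha.le hb hc hγ hΦ0 hz.1 hΦz hgt).ne hΦK
end

section
/- Let f(K) = (1 − (K+1)/T_c)·log₂(γ̄ a K²) for K ∈ (0, T_c − 1), with a, γ̄ > 0, T_c > 1, and γ̄ a (T_c−1)² > e². Then the unique critical point of f in (0, T_c−1) is K = (T_c − 1)/W(e·√(γ̄ a)·(T_c − 1)), where W is the principal Lambert W function. -/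
/-!
Writing `c = γ̄ a`, the derivative of `f` at `K > 0` is `r(K) / (T_c log 2)` with
`r(K) = 2 (T_c − 1) / K − 2 − log (c K²)`, which is strictly decreasing on `(0, ∞)`; so `f` has
at most one critical point there. Substituting `K = (T_c − 1) / w` turns `r(K) = 0` into
`w + log w = 1 + log (√c (T_c − 1))`, i.e. `w e^w = e √c (T_c − 1)`, the defining equation of
`w = W(e √c (T_c − 1))`.
-/

open Real

namespace HighSNR

noncomputable def criticalResidual (c T K : ℝ) : ℝ :=
  2 * (T - 1) / K - 2 - log (c * K ^ 2)

theorem hasDerivAt_throughput {c T K : ℝ} (hc : c ≠ 0) (hT : T ≠ 0) (hK : K ≠ 0) :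
    HasDerivAt (fun K : ℝ => (1 - (K + 1) / T) * logb 2 (c * K ^ 2))
      (criticalResidual c T K / (T * log 2)) K := by
  have hlin : HasDerivAt (fun K : ℝ => 1 - (K + 1) / T) (-(1 / T)) K := by
    simpa using (((hasDerivAt_id K).add_const 1).div_const T).const_sub 1
  have hlog : HasDerivAt (fun K : ℝ => logb 2 (c * K ^ 2))
      (c * (2 * K ^ 1) / (c * K ^ 2) / log 2) K :=
    (((hasDerivAt_pow 2 K).const_mul c).log (by positivity)).div_const (log 2)
  refine (hlin.fun_mul hlog).congr_deriv ?_
  have hlog2 : log 2 ≠ 0 := (log_pos one_lt_two).ne'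
  rw [criticalResidual, logb]
  field_simp
  ring

theorem deriv_throughput_eq_zero_iff {c T K : ℝ} (hc : c ≠ 0) (hT : T ≠ 0) (hK : K ≠ 0) :
    deriv (fun K : ℝ => (1 - (K + 1) / T) * logb 2 (c * K ^ 2)) K = 0 ↔
      criticalResidual c T K = 0 := by
  have hden : T * log 2 ≠ 0 := mul_ne_zero hT (log_pos one_lt_two).ne'
  rw [(hasDerivAt_throughput hc hT hK).deriv, div_eq_zero_iff, or_iff_left hden]

theorem strictAntiOn_criticalResidual {c T : ℝ} (hc : 0 < c) (hT : 1 ≤ T) :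
    StrictAntiOn (criticalResidual c T) (Set.Ioi 0) := by
  intro x (hx : 0 < x) y _ hxy
  have hfrac : 2 * (T - 1) / y ≤ 2 * (T - 1) / x :=
    div_le_div_of_nonneg_left (by linarith) hx hxy.le
  have hlog : log (c * x ^ 2) < log (c * y ^ 2) :=
    log_lt_log (by positivity)
      (mul_lt_mul_of_pos_left (pow_lt_pow_left₀ hxy hx.le two_ne_zero) hc)
  simp only [criticalResidual]
  linarith

theorem criticalResidual_div_lambertW {c T w : ℝ} (hc : 0 < c) (hT : 1 < T) (hw : 0 < w)
    (hweq : w * exp w = exp 1 * √c * (T - 1)) :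
    criticalResidual c T ((T - 1) / w) = 0 := by
  have hT1 : 0 < T - 1 := by linarith
  have hlambert : log w + w = 1 + log c / 2 + log (T - 1) := by
    have := congrArg log hweq
    rwa [log_mul hw.ne' (exp_ne_zero w), log_exp, log_mul (by positivity) hT1.ne',
      log_mul (exp_ne_zero 1) (by positivity), log_exp, log_sqrt hc.le] at this
  have hlogK : log (c * ((T - 1) / w) ^ 2) = log c + 2 * (log (T - 1) - log w) := by
    rw [log_mul hc.ne' (by positivity), log_pow, log_div hT1.ne' hw.ne']
    push_cast
    ring
  have hfrac : 2 * (T - 1) / ((T - 1) / w) = 2 * w := by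
    field_simp
  rw [criticalResidual, hfrac, hlogK]
  linarith

end HighSNR

open HighSNR in
theorem high_snr_critical_point_general (a γ Tc : ℝ)
    (ha : 0 < a) (hγ : 0 < γ) (hTc : 1 < Tc)
    (w : ℝ) (hw : 0 < w)
    (hweq : w * Real.exp w = Real.exp 1 * Real.sqrt (γ * a) * (Tc - 1)) :
    ∀ K ∈ Set.Ioo (0 : ℝ) (Tc - 1),
      (deriv (fun K : ℝ => (1 - (K + 1) / Tc) * Real.logb 2 (γ * a * K ^ 2)) K = 0
        ↔ K = (Tc - 1) / w) := by
  intro K hK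
  have hc : 0 < γ * a := mul_pos hγ ha
  have hK₀ : (Tc - 1) / w ∈ Set.Ioi (0 : ℝ) := div_pos (by linarith) hw
  rw [deriv_throughput_eq_zero_iff hc.ne' (by linarith) hK.1.ne',
    ← criticalResidual_div_lambertW hc hTc hw hweq]
  exact (strictAntiOn_criticalResidual hc hTc.le).injOn.eq_iff hK.1 hK₀

/-- For `f(K) = (1 − (K+1)/T_c) log₂(γ̄ a K²)` with `a, γ̄ > 0`, `T_c > 1` and
`γ̄ a (T_c−1)² > e²`, the unique critical point of `f` in `(0, T_c − 1)` is
`K = (T_c − 1)/W(e √(γ̄a) (T_c − 1))`, where `w = W(e √(γ̄a) (T_c−1))` is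
characterized by `w > 0`, `w e^w = e √(γ̄a) (T_c−1)`. -/
theorem high_snr_critical_point (a γ Tc : ℝ)
    (ha : 0 < a) (hγ : 0 < γ) (hTc : 1 < Tc)
    (hcond : γ * a * (Tc - 1) ^ 2 > Real.exp 1 ^ 2)
    (w : ℝ) (hw : 0 < w)
    (hweq : w * Real.exp w = Real.exp 1 * Real.sqrt (γ * a) * (Tc - 1)) :
    ∀ K ∈ Set.Ioo (0 : ℝ) (Tc - 1),
      (deriv (fun K : ℝ => (1 - (K + 1) / Tc) * Real.logb 2 (γ * a * K ^ 2)) K = 0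
        ↔ K = (Tc - 1) / w) :=
  high_snr_critical_point_general a γ Tc ha hγ hTc w hw hweq
end

section
/- Let a, b, c, γ̄ > 0, T_c > 1, and let K* be the unique maximizer of R̃(K) = (1 − (K+1)/T_c)·log₂(1 + γ̄(aK² + bK + c)) on (0, T_c − 1]. Viewing K* as a function of T_c (with a, b, c, γ̄ fixed), K* is strictly increasing in T_c. -/
/-!
At a stationary point `K` of `R̃`, the concave function
`G_T(K) = γ̄ (T - K - 1)(2aK + b) - q(K) ln q(K)`, `q(K) = 1 + γ̄(aK² + bK + c)`, vanishes.
Concavity holds because `x ↦ x ln x` is convex and increasing on `[1, ∞)` and `q ≥ 1` is convex.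
Raising `T` raises `G_T` pointwise, so if `T₁ < T₂` then `G_{T₂}` is positive at `0` and at `K₁`,
hence on all of `[0, K₁]`, and its zero `K₂` must lie to the right of `K₁`.
-/

open Real Set

theorem ConvexOn.comp_of_mapsTo {𝕜 E α β : Type*} [Semiring 𝕜] [PartialOrder 𝕜]
    [AddCommMonoid E] [AddCommMonoid α] [PartialOrder α] [AddCommMonoid β] [PartialOrder β]
    [SMul 𝕜 E] [SMul 𝕜 α] [SMul 𝕜 β] {s : Set E} {t : Set β} {f : E → β} {g : β → α}
    (hg : ConvexOn 𝕜 t g) (hf : ConvexOn 𝕜 s f) (hg' : MonotoneOn g t) (hst : MapsTo f s t) :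
    ConvexOn 𝕜 s (g ∘ f) :=
  ⟨hf.1, fun _ hx _ hy _ _ ha hb hab =>
    (hg' (hst (hf.1 hx hy ha hb hab)) (hg.1 (hst hx) (hst hy) ha hb hab)
      (hf.2 hx hy ha hb hab)).trans (hg.2 (hst hx) (hst hy) ha hb hab)⟩

theorem convexOn_quadratic {p q r : ℝ} (hp : 0 ≤ p) :
    ConvexOn ℝ univ (fun x : ℝ => p * x ^ 2 + q * x + r) := by
  refine ⟨convex_univ, fun x _ y _ α β hα hβ hαβ => ?_⟩
  obtain rfl : β = 1 - α := by linarith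
  simp only [smul_eq_mul]
  nlinarith [mul_nonneg (mul_nonneg hα hβ) (mul_nonneg hp (sq_nonneg (x - y)))]

section StationaryPoint

variable (a b c γ : ℝ)

def snrFactor (K : ℝ) : ℝ := 1 + γ * (a * K ^ 2 + b * K + c)

/-- `R̃'(K) = stationarityGap a b c γ T K / (T q(K) ln 2)` with `q = snrFactor a b c γ`. -/
noncomputable def stationarityGap (T K : ℝ) : ℝ :=
  γ * (T - K - 1) * (2 * a * K + b) - snrFactor a b c γ K * log (snrFactor a b c γ K)

variable {a b c γ}

theorem one_le_snrFactor (ha : 0 ≤ a) (hb : 0 ≤ b) (hc : 0 ≤ c) (hγ : 0 ≤ γ) {K : ℝ}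
    (hK : 0 ≤ K) : 1 ≤ snrFactor a b c γ K := by
  unfold snrFactor
  have : 0 ≤ γ * (a * K ^ 2 + b * K + c) := by positivity
  linarith

theorem convexOn_snrFactor_mul_log (ha : 0 ≤ a) (hb : 0 ≤ b) (hc : 0 ≤ c) (hγ : 0 ≤ γ) :
    ConvexOn ℝ (Ici 0) (fun K => snrFactor a b c γ K * log (snrFactor a b c γ K)) := by
  have hq : ConvexOn ℝ (Ici 0) (snrFactor a b c γ) := by
    refine ((convexOn_quadratic (q := γ * b) (r := 1 + γ * c) (mul_nonneg hγ ha)).subset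
      (subset_univ _) (convex_Ici 0)).congr fun K _ => ?_
    simp only [snrFactor]
    ring
  have hmono : MonotoneOn (fun x : ℝ => x * log x) (Ici 1) :=
    mul_log_strictMonoOn.monotoneOn.mono
      (Ici_subset_Ici.2 (exp_le_one_iff.2 (by norm_num)))
  exact (convexOn_mul_log.subset (Ici_subset_Ici.2 zero_le_one) (convex_Ici 1)).comp_of_mapsTo
    hq hmono fun K hK => one_le_snrFactor ha hb hc hγ hK

theorem concaveOn_stationarityGap (ha : 0 ≤ a) (hb : 0 ≤ b) (hc : 0 ≤ c) (hγ : 0 ≤ γ)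
    (T : ℝ) : ConcaveOn ℝ (Ici 0) (stationarityGap a b c γ T) := by
  have hquad : ConcaveOn ℝ (Ici 0) (fun K => γ * (T - K - 1) * (2 * a * K + b)) := by
    refine ((convexOn_quadratic (q := γ * (b - 2 * a * (T - 1))) (r := -(γ * b * (T - 1)))
      (by positivity : 0 ≤ 2 * a * γ)).neg.subset (subset_univ _) (convex_Ici 0)).congr
      fun K _ => ?_
    simp only [Pi.neg_apply]
    ring
  exact hquad.sub (convexOn_snrFactor_mul_log ha hb hc hγ)

theorem strictMono_stationarityGap (ha : 0 ≤ a) (hb : 0 < b) (hγ : 0 < γ) {K : ℝ} (hK : 0 ≤ K) :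
    StrictMono fun T => stationarityGap a b c γ T K := by
  intro T₁ T₂ hT
  have : 0 < γ * (T₂ - T₁) * (2 * a * K + b) := by
    have : 0 < 2 * a * K + b := by positivity
    have : 0 < T₂ - T₁ := sub_pos.2 hT
    positivity
  unfold stationarityGap
  linarith

theorem stationarityGap_eq_zero {T K : ℝ} (hq : snrFactor a b c γ K ≠ 0)
    (h : γ * (T - K - 1) * (2 * a * K + b) / snrFactor a b c γ K
      = log (snrFactor a b c γ K)) :
    stationarityGap a b c γ T K = 0 := by
  rw [div_eq_iff hq] at h
  unfold stationarityGap
  linarith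

theorem stationarityGap_zero_pos (hc : 0 ≤ c) (hγ : 0 ≤ γ) {T : ℝ}
    (h : γ * b * (T - 1) / (1 + γ * c) > log (1 + γ * c)) :
    0 < stationarityGap a b c γ T 0 := by
  have hq : 0 < 1 + γ * c := by positivity
  rw [gt_iff_lt, lt_div_iff₀ hq] at h
  norm_num [stationarityGap, snrFactor]
  linarith

end StationaryPoint

/-- The optimal `K*`, characterized as the unique stationary point in
`(0, T_c − 1)` of `R̃(K) = (1 − (K+1)/T_c) log₂(1 + γ̄(aK² + bK + c))`
(equivalently, the unique solution of
`γ̄(T_c − K − 1)(2aK + b)/(1 + γ̄(aK² + bK + c)) = ln(1 + γ̄(aK² + bK + c))`),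
is strictly increasing in `T_c`. -/
theorem optimal_K_increasing_in_Tc (a b c γ : ℝ)
    (ha : 0 < a) (hb : 0 < b) (hc : 0 < c) (hγ : 0 < γ) :
    ∀ Tc₁ Tc₂ K₁ K₂ : ℝ, 1 < Tc₁ → 1 < Tc₂ →
      γ * b * (Tc₁ - 1) / (1 + γ * c) > Real.log (1 + γ * c) →
      γ * b * (Tc₂ - 1) / (1 + γ * c) > Real.log (1 + γ * c) →
      K₁ ∈ Set.Ioo (0 : ℝ) (Tc₁ - 1) →
      γ * (Tc₁ - K₁ - 1) * (2 * a * K₁ + b) / (1 + γ * (a * K₁ ^ 2 + b * K₁ + c))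
        = Real.log (1 + γ * (a * K₁ ^ 2 + b * K₁ + c)) →
      K₂ ∈ Set.Ioo (0 : ℝ) (Tc₂ - 1) →
      γ * (Tc₂ - K₂ - 1) * (2 * a * K₂ + b) / (1 + γ * (a * K₂ ^ 2 + b * K₂ + c))
        = Real.log (1 + γ * (a * K₂ ^ 2 + b * K₂ + c)) →
      Tc₁ < Tc₂ → K₁ < K₂ := by
  intro Tc₁ Tc₂ K₁ K₂ _ _ _ hgap₀ hK₁ hstat₁ hK₂ hstat₂ hT
  by_contra! hK
  have hq {K : ℝ} (hK : 0 ≤ K) : snrFactor a b c γ K ≠ 0 :=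
    (one_pos.trans_le (one_le_snrFactor ha.le hb.le hc.le hγ.le hK)).ne'
  have hzero₁ := stationarityGap_eq_zero (hq hK₁.1.le) hstat₁
  have hzero₂ := stationarityGap_eq_zero (hq hK₂.1.le) hstat₂
  have hpos₀ := stationarityGap_zero_pos (a := a) hc.le hγ.le hgap₀
  have hpos₁ : 0 < stationarityGap a b c γ Tc₂ K₁ :=
    hzero₁ ▸ strictMono_stationarityGap ha.le hb hγ hK₁.1.le hT
  have hmin := (concaveOn_stationarityGap ha.le hb.le hc.le hγ.le Tc₂).min_le_of_mem_Icc
    (mem_Ici.2 le_rfl) hK₁.1.le ⟨hK₂.1.le, hK⟩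
  exact (lt_min hpos₀ hpos₁).not_ge (hzero₂ ▸ hmin)
end
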